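/- arXiv:1903.10379 — 2 statements merged into one kernel-verified Lean document; each statement's English description precedes it below -/
import Mathlib

section
/- Let T be a hyperplane in ℝⁿ (an (n-1)-dimensional linear subspace), α ∈ T, and f : T → T^⊥ a function continuous at α. Set a = α + f(α) and A = {χ + f(χ) : χ ∈ T}. If the tangent cone Tan(A, a) is contained in T, then f is differentiable at α with Df(α) = 0. -/
/-!
If `Df(α) = 0` failed, there would be points `χ → α` along which the increment `f χ - f α ∈ Tᗮ`
dominates `c ‖χ - α‖`. The normalized chords from `a` to the graph points `χ + f χ` then keep a
`Tᗮ`-component of norm at least `c / (1 + c)`, and by compactness of the unit ball they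
accumulate at a tangent vector with the same property, which therefore does not lie in `T`.
-/

open Filter Topology Metric Asymptotics

def tanCone {n : ℕ} (A : Set (EuclideanSpace ℝ (Fin n))) (a : EuclideanSpace ℝ (Fin n)) :
    Set (EuclideanSpace ℝ (Fin n)) :=
  {v | ∀ ε > (0 : ℝ), ∃ x ∈ A, ∃ r : ℝ, 0 < r ∧ ‖x - a‖ < ε ∧ ‖r • (x - a) - v‖ < ε}

theorem mem_tanCone_of_mapClusterPt {n : ℕ} {A : Set (EuclideanSpace ℝ (Fin n))}
    {a v : EuclideanSpace ℝ (Fin n)} {ι : Type*} {l : Filter ι} {x : ι → EuclideanSpace ℝ (Fin n)}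
    {r : ι → ℝ} (hx : Tendsto x l (𝓝 a)) (hxA : ∀ᶠ i in l, x i ∈ A) (hr : ∀ᶠ i in l, 0 < r i)
    (hv : MapClusterPt v l fun i => r i • (x i - a)) :
    v ∈ tanCone A a := by
  intro ε hε
  have hclose : ∀ᶠ i in l, ‖x i - a‖ < ε := by
    simpa only [mem_ball, dist_eq_norm] using hx.eventually (ball_mem_nhds a hε)
  obtain ⟨i, hvi, hAi, hri, hi⟩ :=
    ((hv.frequently (ball_mem_nhds v hε)).and_eventually (hxA.and (hr.and hclose))).exists
  exact ⟨x i, hAi, r i, hri, hi, by simpa only [mem_ball, dist_eq_norm] using hvi⟩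

theorem exists_mem_tanCone_le_norm_apply {n : ℕ} {A : Set (EuclideanSpace ℝ (Fin n))}
    {a : EuclideanSpace ℝ (Fin n)} {F : Type*} [NormedAddCommGroup F] [NormedSpace ℝ F]
    (L : EuclideanSpace ℝ (Fin n) →L[ℝ] F) {δ : ℝ} {ι : Type*} {l : Filter ι} [l.NeBot]
    {x : ι → EuclideanSpace ℝ (Fin n)} (hx : Tendsto x l (𝓝 a)) (hxA : ∀ᶠ i in l, x i ∈ A)
    (hL : ∀ᶠ i in l, δ * ‖x i - a‖ < ‖L (x i - a)‖) :
    ∃ v ∈ tanCone A a, δ ≤ ‖L v‖ := by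
  have hpos : ∀ᶠ i in l, 0 < ‖x i - a‖ := hL.mono fun i hi => by
    by_contra! h
    rw [norm_le_zero_iff.1 h, map_zero, norm_zero, norm_zero, mul_zero] at hi
    exact hi.false
  have hcompact : IsCompact (closedBall (0 : EuclideanSpace ℝ (Fin n)) 1 ∩ {w | δ ≤ ‖L w‖}) :=
    (isCompact_closedBall 0 1).inter_right (isClosed_le continuous_const (by fun_prop))
  have hdir : ∀ᶠ i in l, ‖x i - a‖⁻¹ • (x i - a) ∈
      closedBall (0 : EuclideanSpace ℝ (Fin n)) 1 ∩ {w | δ ≤ ‖L w‖} :=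
    (hpos.and hL).mono fun i ⟨hi, hLi⟩ => by
      refine ⟨?_, ?_⟩
      · rw [mem_closedBall_zero_iff, norm_smul, norm_inv, norm_norm, inv_mul_cancel₀ hi.ne']
      · rw [Set.mem_ofPred_eq, map_smul, norm_smul, norm_inv, norm_norm, le_inv_mul_iff₀ hi,
          mul_comm]
        exact hLi.le
  obtain ⟨v, ⟨-, hv⟩, hcluster⟩ := hcompact.exists_mapClusterPt (tendsto_principal.2 hdir)
  exact ⟨v, mem_tanCone_of_mapClusterPt hx hxA (hpos.mono fun _ => inv_pos.2) hcluster, hv⟩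

theorem mul_norm_add_lt_norm_orthogonalProjectionOnto {E : Type*} [NormedAddCommGroup E]
    [InnerProductSpace ℝ E] {K : Submodule ℝ E} [Kᗮ.HasOrthogonalProjection] {c : ℝ} (hc : 0 < c)
    {x y : E} (hx : x ∈ K) (hy : y ∈ Kᗮ) (h : c * ‖x‖ < ‖y‖) :
    c / (1 + c) * ‖x + y‖ < ‖Kᗮ.orthogonalProjectionOnto (x + y)‖ := by
  rw [map_add, Submodule.orthogonalProjectionOnto_orthogonal_apply_eq_zero hx, zero_add,
    Submodule.orthogonalProjectionOnto_mem_subspace_eq_self ⟨y, hy⟩, div_mul_eq_mul_div,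
    div_lt_iff₀ (by positivity)]
  change c * ‖x + y‖ < ‖y‖ * (1 + c)
  nlinarith [norm_add_le x y]

theorem stmt_0_general {n : ℕ} (T : Submodule ℝ (EuclideanSpace ℝ (Fin n)))
    (f : T → Tᗮ) (α : T) (hf : ContinuousAt f α)
    (a : EuclideanSpace ℝ (Fin n)) (ha : a = (α : EuclideanSpace ℝ (Fin n)) + (f α : EuclideanSpace ℝ (Fin n)))
    (A : Set (EuclideanSpace ℝ (Fin n)))
    (hA : A = {x | ∃ χ : T, x = (χ : EuclideanSpace ℝ (Fin n)) + (f χ : EuclideanSpace ℝ (Fin n))})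
    (htan : tanCone A a ⊆ (T : Set (EuclideanSpace ℝ (Fin n)))) :
    HasFDerivAt f (0 : T →L[ℝ] Tᗮ) α := by
  rw [hasFDerivAt_iff_isLittleO, isLittleO_iff]
  intro c hc
  by_contra hsteep
  simp only [zero_apply, sub_zero, not_eventually, not_le] at hsteep
  set S : Set T := {χ | c * ‖χ - α‖ < ‖f χ - f α‖}
  have : (𝓝[S] α).NeBot := frequently_iff_neBot.1 hsteep
  have hgraph : Tendsto (fun χ : T => (χ : EuclideanSpace ℝ (Fin n)) + f χ) (𝓝[S] α) (𝓝 a) :=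
    ha ▸ (continuousAt_subtype_val.add (continuousAt_subtype_val.comp hf)).tendsto.mono_left
      nhdsWithin_le_nhds
  obtain ⟨v, hv, hδv⟩ := exists_mem_tanCone_le_norm_apply Tᗮ.orthogonalProjectionOnto hgraph
    (eventually_nhdsWithin_of_forall fun χ _ => show _ ∈ A from hA ▸ ⟨χ, rfl⟩)
    (eventually_nhdsWithin_of_forall fun χ hχ => by
      have hchord : (χ : EuclideanSpace ℝ (Fin n)) + f χ - a = ↑(χ - α) + ↑(f χ - f α) := by
        rw [ha]; push_cast; abel
      rw [hchord]
      exact mul_norm_add_lt_norm_orthogonalProjectionOnto hc (χ - α).2 (f χ - f α).2 hχ)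
  rw [Submodule.orthogonalProjectionOnto_orthogonal_apply_eq_zero (htan hv), norm_zero] at hδv
  exact hδv.not_gt (by positivity)

theorem stmt_0 {n : ℕ} (T : Submodule ℝ (EuclideanSpace ℝ (Fin n)))
    (hT : Module.finrank ℝ T = n - 1)
    (f : T → Tᗮ) (α : T) (hf : ContinuousAt f α)
    (a : EuclideanSpace ℝ (Fin n)) (ha : a = (α : EuclideanSpace ℝ (Fin n)) + (f α : EuclideanSpace ℝ (Fin n)))
    (A : Set (EuclideanSpace ℝ (Fin n)))
    (hA : A = {x | ∃ χ : T, x = (χ : EuclideanSpace ℝ (Fin n)) + (f χ : EuclideanSpace ℝ (Fin n))})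
    (htan : tanCone A a ⊆ (T : Set (EuclideanSpace ℝ (Fin n)))) :
    HasFDerivAt f (0 : T →L[ℝ] Tᗮ) α :=
  stmt_0_general T f α hf a ha A hA htan
end

section
/- Let Σ = T ∩ S^{n-1} where T ∈ G(n, m+1) is an (m+1)-dimensional linear subspace of ℝⁿ and S^{n-1} the unit sphere. Then for every a ∈ Σ, the set {η ∈ ℝⁿ : η • (w - a) ≥ 0 for every w ∈ Σ} equals {η ∈ T^⊥ ⊕ span(a) : η • (-a) ≥ 0}; that is, it equals D(Tan(Σ,a), -a) := Tan(Σ,a)^⊥ ∩ {u : u • (-a) ≥ 0}, where Tan(Σ,a) = {v ∈ T : v • a = 0}. -/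
/-!
If `η ⬝ (w - a) ≥ 0` for all unit vectors `w ∈ T`, testing with `w = -a` gives `η ⬝ a ≤ 0`.
For `v ∈ T` orthogonal to `a`, the great circle through `a` in direction `v` lies in `T ∩ S`,
and along its rational parametrisation `η ⬝ (w - a)` has the sign of the quadratic
`2 s (η ⬝ v) - 2 s² ‖v‖² (η ⬝ a)`; a quadratic without constant term that is nonnegative
everywhere has vanishing linear coefficient, so `η ⬝ v = 0`. Conversely, for `η ⊥ Tan` every
unit `w ∈ T` satisfies `η ⬝ (w - a) = (a ⬝ w - 1) (η ⬝ a)`, which is `≥ 0` by Cauchy–Schwarz.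
-/

open scoped RealInnerProductSpace

section

variable {E : Type*} [NormedAddCommGroup E] [InnerProductSpace ℝ E]

/-- For `‖a‖ = 1` and `a ⊥ v`, the rational parametrisation of the great circle through `a`
(at `s = 0`) in the direction `v`. -/
noncomputable def circlePoint (a v : E) (s : ℝ) : E :=
  (1 + s ^ 2 * ‖v‖ ^ 2)⁻¹ • ((1 - s ^ 2 * ‖v‖ ^ 2) • a + (2 * s) • v)

lemma circlePoint_mem {T : Submodule ℝ E} {a v : E} (ha : a ∈ T) (hv : v ∈ T) (s : ℝ) :
    circlePoint a v s ∈ T :=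
  T.smul_mem _ (T.add_mem (T.smul_mem _ ha) (T.smul_mem _ hv))

lemma norm_circlePoint {a v : E} (ha : ‖a‖ = 1) (hav : ⟪a, v⟫ = 0) (s : ℝ) :
    ‖circlePoint a v s‖ = 1 := by
  have hpos : 0 < 1 + s ^ 2 * ‖v‖ ^ 2 := by positivity
  have hsq : ‖(1 - s ^ 2 * ‖v‖ ^ 2) • a + (2 * s) • v‖ ^ 2 = (1 + s ^ 2 * ‖v‖ ^ 2) ^ 2 := by
    rw [norm_add_sq_real, real_inner_smul_left, real_inner_smul_right, hav, norm_smul,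
      norm_smul, mul_pow, mul_pow, ha, Real.norm_eq_abs, Real.norm_eq_abs, sq_abs, sq_abs]
    ring
  rw [circlePoint, norm_smul, norm_inv, Real.norm_of_nonneg hpos.le,
    (sq_eq_sq₀ (norm_nonneg _) hpos.le).mp hsq, inv_mul_cancel₀ hpos.ne']

lemma inner_circlePoint_sub (η a v : E) (s : ℝ) :
    ⟪η, circlePoint a v s - a⟫ =
      (1 + s ^ 2 * ‖v‖ ^ 2)⁻¹ * (2 * s * ⟪η, v⟫ - 2 * s ^ 2 * ‖v‖ ^ 2 * ⟪η, a⟫) := by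
  rw [circlePoint, inner_sub_right, real_inner_smul_right, inner_add_right,
    real_inner_smul_right, real_inner_smul_right]
  field_simp
  ring

lemma eq_zero_of_forall_mul_add_sq_nonneg {b c : ℝ} (h : ∀ s : ℝ, 0 ≤ s * b + s ^ 2 * c) :
    b = 0 := by
  have hdisc := discrim_le_zero (a := c) (b := b) (c := 0) fun s => by nlinarith [h s]
  rw [discrim] at hdisc
  nlinarith [sq_nonneg b]

variable {T : Submodule ℝ E} {a η : E}

lemma inner_nonpos_of_forall_inner_sub_nonneg (ha : a ∈ T) (ha1 : ‖a‖ = 1)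
    (h : ∀ w ∈ (T : Set E) ∩ Metric.sphere 0 1, 0 ≤ ⟪η, w - a⟫) : ⟪η, a⟫ ≤ 0 := by
  have := h (-a) ⟨T.neg_mem ha, by simp [ha1]⟩
  rw [inner_sub_right, inner_neg_right] at this
  linarith

lemma inner_eq_zero_of_forall_inner_sub_nonneg (ha : a ∈ T) (ha1 : ‖a‖ = 1)
    (h : ∀ w ∈ (T : Set E) ∩ Metric.sphere 0 1, 0 ≤ ⟪η, w - a⟫)
    {v : E} (hv : v ∈ T) (hav : ⟪a, v⟫ = 0) : ⟪η, v⟫ = 0 := by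
  have hquad : ∀ s : ℝ, 0 ≤ s * (2 * ⟪η, v⟫) + s ^ 2 * (-(2 * ‖v‖ ^ 2 * ⟪η, a⟫)) := by
    intro s
    have hs := h (circlePoint a v s)
      ⟨circlePoint_mem ha hv s, mem_sphere_zero_iff_norm.mpr (norm_circlePoint ha1 hav s)⟩
    rw [inner_circlePoint_sub, mul_nonneg_iff_of_pos_left (by positivity)] at hs
    linarith
  linarith [eq_zero_of_forall_mul_add_sq_nonneg hquad]

lemma inner_sub_nonneg_of_mem_orthogonal (ha : a ∈ T) (ha1 : ‖a‖ = 1)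
    (hη : η ∈ (T ⊓ (ℝ ∙ a)ᗮ)ᗮ) (hηa : ⟪η, a⟫ ≤ 0) {w : E} (hw : w ∈ T) (hw1 : ‖w‖ = 1) :
    0 ≤ ⟪η, w - a⟫ := by
  have htan : w - ⟪a, w⟫ • a ∈ T ⊓ (ℝ ∙ a)ᗮ := by
    refine ⟨T.sub_mem hw (T.smul_mem _ ha), ?_⟩
    rw [SetLike.mem_coe, Submodule.mem_orthogonal_singleton_iff_inner_right, inner_sub_right,
      real_inner_smul_right, real_inner_self_eq_norm_sq, ha1]
    ring
  have hη_tan : ⟪η, w - ⟪a, w⟫ • a⟫ = 0 :=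
    Submodule.inner_left_of_mem_orthogonal htan hη
  have haw : ⟪a, w⟫ ≤ 1 := by simpa [ha1, hw1] using real_inner_le_norm a w
  have hsplit : w - a = (w - ⟪a, w⟫ • a) + (⟪a, w⟫ - 1) • a := by module
  rw [hsplit, inner_add_right, hη_tan, real_inner_smul_right]
  nlinarith

theorem setOf_forall_inner_sub_nonneg_eq (ha : a ∈ T) (ha1 : ‖a‖ = 1) :
    {η : E | ∀ w ∈ (T : Set E) ∩ Metric.sphere 0 1, 0 ≤ ⟪η, w - a⟫} =
      ((T ⊓ (ℝ ∙ a)ᗮ)ᗮ : Set E) ∩ {u | 0 ≤ ⟪u, -a⟫} := by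
  ext η
  simp only [Set.mem_ofPred_eq, Set.mem_inter_iff, SetLike.mem_coe, inner_neg_right,
    neg_nonneg]
  constructor
  · intro h
    refine ⟨fun v hv => ?_, inner_nonpos_of_forall_inner_sub_nonneg ha ha1 h⟩
    rw [real_inner_comm]
    exact inner_eq_zero_of_forall_inner_sub_nonneg ha ha1 h hv.1
      ((Submodule.mem_orthogonal_singleton_iff_inner_right).mp hv.2)
  · rintro ⟨hη, hηa⟩ w ⟨hw, hw1⟩
    exact inner_sub_nonneg_of_mem_orthogonal ha ha1 hη hηa hw (mem_sphere_zero_iff_norm.mp hw1)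

end

theorem stmt_10_general {n : ℕ} (T : Submodule ℝ (EuclideanSpace ℝ (Fin n)))
    (Sig : Set (EuclideanSpace ℝ (Fin n)))
    (hSig : Sig = (T : Set (EuclideanSpace ℝ (Fin n))) ∩ Metric.sphere 0 1)
    (a : EuclideanSpace ℝ (Fin n)) (ha : a ∈ Sig)
    (Tan : Submodule ℝ (EuclideanSpace ℝ (Fin n)))
    (hTan : Tan = T ⊓ (Submodule.span ℝ {a})ᗮ) :
    {η : EuclideanSpace ℝ (Fin n) | ∀ w ∈ Sig, 0 ≤ ⟪η, w - a⟫} =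
      (Tanᗮ : Set (EuclideanSpace ℝ (Fin n))) ∩ {u | 0 ≤ ⟪u, -a⟫} := by
  subst hSig hTan
  exact setOf_forall_inner_sub_nonneg_eq ha.1 (mem_sphere_zero_iff_norm.mp ha.2)

theorem stmt_10 {n m : ℕ} (T : Submodule ℝ (EuclideanSpace ℝ (Fin n)))
    (hT : Module.finrank ℝ T = m + 1)
    (Sig : Set (EuclideanSpace ℝ (Fin n)))
    (hSig : Sig = (T : Set (EuclideanSpace ℝ (Fin n))) ∩ Metric.sphere 0 1)
    (a : EuclideanSpace ℝ (Fin n)) (ha : a ∈ Sig)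
    (Tan : Submodule ℝ (EuclideanSpace ℝ (Fin n)))
    (hTan : Tan = T ⊓ (Submodule.span ℝ {a})ᗮ) :
    {η : EuclideanSpace ℝ (Fin n) | ∀ w ∈ Sig, 0 ≤ ⟪η, w - a⟫} =
      (Tanᗮ : Set (EuclideanSpace ℝ (Fin n))) ∩ {u | 0 ≤ ⟪u, -a⟫} :=
  stmt_10_general T Sig hSig a ha Tan hTan
end
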